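/- Let S be a contractible P-polyhedral system with attractor K. If y ∈ K is a cut point of K not in G_S(V_P) = ⋃_{j∈I*} S_j(V_P), then the number of connected components of K \ {y} is at most n_P, the number of vertices of P. -/

import Mathlib

/-!
The attractor `K` lies in `P` and is connected: it is the decreasing intersection of the
iterates of the Hutchinson operator on `⋃ i, S i '' P`, and these are connected because
distinct pieces meet only at images of vertices, which all iterates contain.

For every `n` pick a level-`n` piece `U n = Sw S (w n) '' K` containing `y`. Since distinct
pieces of the same level meet only in images of vertices, `U n` meets the closure of `K \ U n`
in at most `#V` points, none of them `y`. By boundary bumping every component of `K \ {y}`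
meets `U n`; as the `U n` shrink to `y`, any finitely many components eventually also leave
`U n`, so each passes through that frontier, and distinct components through distinct points.
-/

open Set

/-- `S` is a `P`-polyhedral system with vertex set `V`: the maps are contraction
similarities, each `Pᵢ = Sᵢ(P)` lies in `P`, distinct `Pᵢ, Pⱼ` meet in at most one
point which is then a common vertex, and every vertex of `P` is a vertex of some
`Pᵢ`. -/
def IsPPolyhedralSystem {d : ℕ} {ι : Type*} (P : Set (EuclideanSpace ℝ (Fin d)))
    (V : Finset (EuclideanSpace ℝ (Fin d)))
    (S : ι → EuclideanSpace ℝ (Fin d) → EuclideanSpace ℝ (Fin d)) : Prop :=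
  (∀ i, ∃ r ∈ Set.Ioo (0 : ℝ) 1, ∀ x y, dist (S i x) (S i y) = r * dist x y) ∧
  (∀ i, S i '' P ⊆ P) ∧
  (∀ i j, i ≠ j → (S i '' P ∩ S j '' P = ∅ ∨
    ∃ v, S i '' P ∩ S j '' P = {v} ∧ v ∈ S i '' (V : Set (EuclideanSpace ℝ (Fin d))) ∧
      v ∈ S j '' (V : Set (EuclideanSpace ℝ (Fin d))))) ∧
  ((V : Set (EuclideanSpace ℝ (Fin d))) ⊆
    ⋃ i, S i '' (V : Set (EuclideanSpace ℝ (Fin d))))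

/-- The polyhedron data: `P` is a compact set homeomorphic to the closed `d`-ball, with
finite vertex set `V ⊆ P`. -/
def IsPolyhedronWithVertices {d : ℕ} (P : Set (EuclideanSpace ℝ (Fin d)))
    (V : Finset (EuclideanSpace ℝ (Fin d))) : Prop :=
  IsCompact P ∧ (V : Set (EuclideanSpace ℝ (Fin d))) ⊆ P ∧
    Nonempty (P ≃ₜ Metric.closedBall (0 : EuclideanSpace ℝ (Fin d)) 1)

/-- The composition `S_{j₁} ∘ ⋯ ∘ S_{jₙ}` associated to a multiindex `j`. -/
def Sw {d : ℕ} {ι : Type*} (S : ι → EuclideanSpace ℝ (Fin d) → EuclideanSpace ℝ (Fin d)) :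
    List ι → EuclideanSpace ℝ (Fin d) → EuclideanSpace ℝ (Fin d) :=
  fun l => l.foldr (fun i f => S i ∘ f) id

open Filter Topology

theorem finite_and_natCard_le_of_forall_finset_card_le {α : Type*} {s : Set α} {N : ℕ}
    (h : ∀ t : Finset α, ↑t ⊆ s → t.card ≤ N) : s.Finite ∧ Nat.card s ≤ N := by
  have hs : s.Finite := by
    by_contra hinf
    obtain ⟨t, hts, ht⟩ := Set.Infinite.exists_subset_card_eq hinf (N + 1)
    have := h t hts
    omega
  refine ⟨hs, ?_⟩
  rw [Nat.card_coe_set_eq, ncard_eq_toFinset_card s hs]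
  exact h _ (by simp)

theorem reflTransGen_of_isPreconnected_iUnion {X ι : Type*} [TopologicalSpace X] [Finite ι]
    {s : ι → Set X} (hs : ∀ i, IsClosed (s i)) (hne : ∀ i, (s i).Nonempty)
    (h : IsPreconnected (⋃ i, s i)) (i j : ι) :
    Relation.ReflTransGen (fun i j => (s i ∩ s j).Nonempty) i j := by
  by_contra hij
  set Q := {k | Relation.ReflTransGen (fun i j => (s i ∩ s j).Nonempty) i k}
  have hcover : ⋃ k, s k ⊆ (⋃ k ∈ Q, s k) ∪ ⋃ k ∈ Qᶜ, s k := fun z hz => by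
    obtain ⟨k, hk⟩ := mem_iUnion.1 hz
    by_cases hkQ : k ∈ Q
    exacts [Or.inl (mem_biUnion hkQ hk), Or.inr (mem_biUnion hkQ hk)]
  obtain ⟨zi, hzi⟩ := hne i
  obtain ⟨zj, hzj⟩ := hne j
  obtain ⟨z, -, hzQ, hzQc⟩ := isPreconnected_closed_iff.1 h _ _
    (Q.toFinite.isClosed_biUnion fun k _ => hs k) (Qᶜ.toFinite.isClosed_biUnion fun k _ => hs k)
    hcover ⟨zi, mem_iUnion_of_mem i hzi, mem_biUnion Relation.ReflTransGen.refl hzi⟩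
    ⟨zj, mem_iUnion_of_mem j hzj, mem_biUnion hij hzj⟩
  obtain ⟨a, haQ, hza⟩ := mem_iUnion₂.1 hzQ
  obtain ⟨b, hbQ, hzb⟩ := mem_iUnion₂.1 hzQc
  exact hbQ (haQ.tail ⟨z, hza, hzb⟩)

section Continuum

variable {X : Type*} [TopologicalSpace X] [T2Space X]

theorem isPreconnected_iInter_of_antitone {A : ℕ → Set X} (hA : Antitone A)
    (hc : ∀ n, IsCompact (A n)) (hconn : ∀ n, IsPreconnected (A n)) :
    IsPreconnected (⋂ n, A n) := by
  have hL : IsCompact (⋂ n, A n) :=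
    (hc 0).of_isClosed_subset (isClosed_iInter fun n => (hc n).isClosed) (iInter_subset A 0)
  refine (isPreconnected_iff_subset_of_fully_disjoint_closed hL.isClosed).2
    fun u v hu hv hLuv huv => ?_
  obtain ⟨u', v', hu', hv', huu', hvv', huv'⟩ := SeparatedNhds.of_isCompact_isCompact
    (hL.inter_right hu) (hL.inter_right hv) (huv.mono inter_subset_right inter_subset_right)
  obtain ⟨N, hN⟩ := exists_subset_nhds_of_isCompact' hA.directed_ge hc
    (fun n => (hc n).isClosed)
    fun x hx => (hu'.union hv').mem_nhds <|
      (hLuv hx).imp (fun h => huu' ⟨hx, h⟩) (fun h => hvv' ⟨hx, h⟩)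
  have hLN : ⋂ n, A n ⊆ A N := iInter_subset A N
  rcases (hconn N).subset_or_subset hu' hv' huv' hN with h | h
  · exact Or.inl fun x hx => (hLuv hx).resolve_right fun hxv =>
      huv'.ne_of_mem (h (hLN hx)) (hvv' ⟨hx, hxv⟩) rfl
  · exact Or.inr fun x hx => (hLuv hx).resolve_left fun hxu =>
      huv'.ne_of_mem (huu' ⟨hx, hxu⟩) (h (hLN hx)) rfl

/-- The clopen neighbourhoods of `x` form a directed family of compact sets whose intersection
is `connectedComponent x`. -/
theorem exists_isClopen_subset_of_connectedComponent_subset [CompactSpace X] {x : X}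
    {U : Set X} (hU : IsOpen U) (h : connectedComponent x ⊆ U) :
    ∃ E, IsClopen E ∧ x ∈ E ∧ E ⊆ U := by
  have hdir : Directed (· ⊇ ·) (fun s : {s : Set X // IsClopen s ∧ x ∈ s} => (s : Set X)) :=
    fun s t =>
      ⟨⟨s ∩ t, s.2.1.inter t.2.1, s.2.2, t.2.2⟩, inter_subset_left, inter_subset_right⟩
  have : Nonempty {s : Set X // IsClopen s ∧ x ∈ s} :=
    ⟨⟨univ, isClopen_univ, mem_univ x⟩⟩
  obtain ⟨⟨E, hE, hxE⟩, hEU⟩ := exists_subset_nhds_of_isCompact' hdir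
    (fun s => s.2.1.isClosed.isCompact) (fun s => s.2.1.isClosed)
    fun z hz => hU.mem_nhds (h ((connectedComponent_eq_iInter_isClopen x).symm ▸ hz))
  exact ⟨E, hE, hxE, hEU⟩

/-- The boundary bumping theorem. -/
theorem connectedComponentIn_inter_closure_diff_nonempty {K W : Set X}
    (hK : IsPreconnected K) (hKc : IsCompact K) (hW : IsClosed W) (hWK : W ⊆ K)
    (hKW : ¬ K ⊆ W) {x : X} (hx : x ∈ W) :
    (connectedComponentIn W x ∩ closure (K \ W)).Nonempty := by
  by_contra h
  rw [not_nonempty_iff_eq_empty, ← disjoint_iff_inter_eq_empty] at h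
  have : CompactSpace W := isCompact_iff_compactSpace.mp (hKc.of_isClosed_subset hW hWK)
  obtain ⟨E, hE, hxE, hEF⟩ := exists_isClopen_subset_of_connectedComponent_subset
    (isClosed_closure.preimage continuous_subtype_val).isOpen_compl
    fun a ha hF => h.ne_of_mem
      (by rw [connectedComponentIn_eq_image hx]; exact mem_image_of_mem _ ha) hF rfl
  have hval := hW.isClosedMap_subtype_val
  have hcover : K ⊆ Subtype.val '' E ∪ (closure (K \ W) ∪ Subtype.val '' Eᶜ) := by
    intro z hz
    by_cases hzW : z ∈ W
    · by_cases hzE : (⟨z, hzW⟩ : W) ∈ E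
      · exact Or.inl ⟨_, hzE, rfl⟩
      · exact Or.inr (Or.inr ⟨_, hzE, rfl⟩)
    · exact Or.inr (Or.inl (subset_closure ⟨hz, hzW⟩))
  have hdisj : Disjoint (Subtype.val '' E) (closure (K \ W) ∪ Subtype.val '' Eᶜ) :=
    Disjoint.union_right
      (disjoint_left.2 fun _ ⟨a, ha, hax⟩ hF => hEF ha (by rwa [mem_preimage, hax]))
      ((disjoint_image_iff Subtype.val_injective).2 disjoint_compl_right)
  rcases (isPreconnected_iff_subset_of_fully_disjoint_closed hKc.isClosed).1 hK _ _
      (hval _ hE.isClosed) (isClosed_closure.union (hval _ hE.compl.isClosed)) hcover hdisj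
    with hsub | hsub
  · exact hKW fun z hz => by obtain ⟨a, -, rfl⟩ := hsub hz; exact a.2
  · exact hdisj.ne_of_mem ⟨_, hxE, rfl⟩ (hsub (hWK hx)) rfl

end Continuum

section CutPoint

variable {X : Type*} [TopologicalSpace X] [T2Space X] {K U : Set X} {y z : X}

theorem connectedComponentIn_diff_singleton_inter_nonempty (hK : IsPreconnected K)
    (hKc : IsCompact K) (hy : y ∈ K) (hU : IsClosed U) (hyU : y ∉ closure (K \ U))
    (hz : z ∈ K \ {y}) : (connectedComponentIn (K \ {y}) z ∩ U).Nonempty := by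
  by_contra h
  rw [not_nonempty_iff_eq_empty] at h
  have hWK : closure (K \ U) ⊆ K := closure_minimal sdiff_subset hKc.isClosed
  have hzW : z ∈ closure (K \ U) :=
    subset_closure ⟨hz.1, fun hzU => h.subset ⟨mem_connectedComponentIn hz, hzU⟩⟩
  obtain ⟨q, hqC, hqU⟩ := connectedComponentIn_inter_closure_diff_nonempty hK hKc
    isClosed_closure hWK (fun hKW => hyU (hKW hy)) hzW
  have hsub : connectedComponentIn (closure (K \ U)) z ⊆ connectedComponentIn (K \ {y}) z :=
    isPreconnected_connectedComponentIn.subset_connectedComponentIn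
      (mem_connectedComponentIn hzW) fun a ha =>
        have haW := connectedComponentIn_subset _ _ ha
        ⟨hWK haW, fun hay => hyU (hay ▸ haW)⟩
  have hKWU : closure (K \ closure (K \ U)) ⊆ U :=
    closure_minimal (fun a ha => by_contra fun haU => ha.2 (subset_closure ⟨ha.1, haU⟩)) hU
  exact h.subset ⟨hsub hqC, hKWU hqU⟩

theorem connectedComponentIn_diff_singleton_inter_frontier_nonempty (hK : IsPreconnected K)
    (hKc : IsCompact K) (hy : y ∈ K) (hU : IsClosed U) (hyU : y ∉ closure (K \ U))
    (hz : z ∈ K \ {y}) (hzU : ¬ connectedComponentIn (K \ {y}) z ⊆ U) :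
    (connectedComponentIn (K \ {y}) z ∩ (U ∩ closure (K \ U))).Nonempty := by
  have hCK : connectedComponentIn (K \ {y}) z ⊆ K :=
    (connectedComponentIn_subset _ _).trans sdiff_subset
  obtain ⟨c, hcC, hcU⟩ := not_subset.1 hzU
  refine isPreconnected_closed_iff.1 isPreconnected_connectedComponentIn _ _ hU isClosed_closure
    (fun a ha => ?_) (connectedComponentIn_diff_singleton_inter_nonempty hK hKc hy hU hyU hz)
    ⟨c, hcC, subset_closure ⟨hCK hcC, hcU⟩⟩
  by_cases haU : a ∈ U
  · exact Or.inl haU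
  · exact Or.inr (subset_closure ⟨hCK ha, haU⟩)

theorem finite_components_diff_singleton_of_frontier_card_le (hK : IsPreconnected K)
    (hKc : IsCompact K) (hy : y ∈ K) (U : ℕ → Set X) (F : ℕ → Finset X) {N : ℕ}
    (hU : ∀ n, IsClosed (U n)) (hyU : ∀ n, y ∉ closure (K \ U n))
    (hUy : ∀ x, x ≠ y → ∀ᶠ n in atTop, x ∉ U n)
    (hF : ∀ n, U n ∩ closure (K \ U n) ⊆ F n) (hFN : ∀ n, (F n).card ≤ N) :
    {C : Set X | ∃ z ∈ K \ {y}, C = connectedComponentIn (K \ {y}) z}.Finite ∧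
    Nat.card {C : Set X | ∃ z ∈ K \ {y}, C = connectedComponentIn (K \ {y}) z} ≤ N := by
  refine finite_and_natCard_le_of_forall_finset_card_le fun T hT => ?_
  have hleave : ∀ C ∈ T, ∀ᶠ n in atTop, ¬ C ⊆ U n := by
    intro C hC
    obtain ⟨z, hz, rfl⟩ := hT hC
    exact (hUy z hz.2).mono fun n hn hsub => hn (hsub (mem_connectedComponentIn hz))
  obtain ⟨n, hn⟩ := ((Finset.eventually_all T).2 hleave).exists
  refine (Finset.card_le_card_of_forall_subsingleton (fun C p => p ∈ C) (t := F n)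
    (fun C hC => ?_) fun p _ C₁ hC₁ C₂ hC₂ => ?_).trans (hFN n)
  · obtain ⟨z, hz, rfl⟩ := hT hC
    obtain ⟨p, hpC, hpU⟩ := connectedComponentIn_diff_singleton_inter_frontier_nonempty hK hKc
      hy (hU n) (hyU n) hz (hn _ hC)
    exact ⟨p, hF n hpU, hpC⟩
  · obtain ⟨z₁, -, rfl⟩ := hT hC₁.1
    obtain ⟨z₂, -, rfl⟩ := hT hC₂.1
    rw [connectedComponentIn_eq hC₁.2, connectedComponentIn_eq hC₂.2]

end CutPoint

section Hutchinson

variable {X ι : Type*}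

def hutchinson (S : ι → X → X) (A : Set X) : Set X := ⋃ i, S i '' A

variable {S : ι → X → X} {A B : Set X}

theorem hutchinson_mono : Monotone (hutchinson S) :=
  fun _ _ h => iUnion_mono fun _ => image_mono h

theorem hutchinson_subset_iff : hutchinson S A ⊆ B ↔ ∀ i, MapsTo (S i) A B := by
  simp only [hutchinson, iUnion_subset_iff, mapsTo_iff_image_subset]

theorem subset_iterate_hutchinson (hA : A ⊆ hutchinson S A) (hAB : A ⊆ B) (n : ℕ) :
    A ⊆ (hutchinson S)^[n] (hutchinson S B) :=
  (hutchinson_mono.monotone_iterate_of_le_map hA (Nat.zero_le n)).trans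
    (hutchinson_mono.iterate n (hA.trans (hutchinson_mono hAB)))

theorem isCompact_iterate_hutchinson [TopologicalSpace X] [Finite ι]
    (hS : ∀ i, Continuous (S i)) (hA : IsCompact A) (n : ℕ) :
    IsCompact ((hutchinson S)^[n] A) := by
  induction n with
  | zero => exact hA
  | succ n ih =>
    rw [Function.iterate_succ_apply']
    exact isCompact_iUnion fun i => ih.image (hS i)

end Hutchinson

section SelfSimilar

open scoped NNReal

variable {d : ℕ} {ι : Type*}
  {S : ι → EuclideanSpace ℝ (Fin d) → EuclideanSpace ℝ (Fin d)} {R : ℝ≥0}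
  {A B K : Set (EuclideanSpace ℝ (Fin d))}

theorem Sw_cons (i : ι) (w : List ι) : Sw S (i :: w) = S i ∘ Sw S w := rfl

theorem image_Sw_cons (i : ι) (w : List ι) (A : Set (EuclideanSpace ℝ (Fin d))) :
    Sw S (i :: w) '' A = S i '' (Sw S w '' A) :=
  image_comp (S i) (Sw S w) A

theorem lipschitzWith_Sw (hS : ∀ i, LipschitzWith R (S i)) :
    ∀ w : List ι, LipschitzWith (R ^ w.length) (Sw S w)
  | [] => by simpa [Sw] using LipschitzWith.id
  | i :: w => by
    rw [Sw_cons, List.length_cons, pow_succ']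
    exact (hS i).comp (lipschitzWith_Sw hS w)

theorem mapsTo_Sw (hS : ∀ i, MapsTo (S i) A A) : ∀ w : List ι, MapsTo (Sw S w) A A
  | [] => mapsTo_id A
  | i :: w => (hS i).comp (mapsTo_Sw hS w)

theorem exists_Sw_of_mem_iterate_hutchinson {x : EuclideanSpace ℝ (Fin d)} {n : ℕ}
    (hx : x ∈ (hutchinson S)^[n] A) : ∃ w : List ι, w.length = n ∧ x ∈ Sw S w '' A := by
  induction n generalizing x with
  | zero => exact ⟨[], rfl, x, hx, rfl⟩
  | succ n ih =>
    rw [Function.iterate_succ_apply'] at hx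
    obtain ⟨i, x', hx', rfl⟩ := mem_iUnion.1 hx
    obtain ⟨w, rfl, a, ha, rfl⟩ := ih hx'
    exact ⟨i :: w, rfl, a, ha, rfl⟩

theorem exists_Sw_of_eq_hutchinson (hA : A = hutchinson S A) {x : EuclideanSpace ℝ (Fin d)}
    (hx : x ∈ A) (n : ℕ) : ∃ w : List ι, w.length = n ∧ x ∈ Sw S w '' A :=
  exists_Sw_of_mem_iterate_hutchinson <|
    hutchinson_mono.monotone_iterate_of_le_map hA.le (Nat.zero_le n) hx

theorem tendsto_pow_mul_nhds_zero (hR : R < 1) (D : ℝ) :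
    Tendsto (fun n : ℕ => (R : ℝ) ^ n * D) atTop (𝓝 0) := by
  simpa using (tendsto_pow_atTop_nhds_zero_of_lt_one R.coe_nonneg hR).mul_const D

theorem dist_le_of_mem_Sw_image (hS : ∀ i, LipschitzWith R (S i)) (hA : Bornology.IsBounded A)
    {w : List ι} {x y : EuclideanSpace ℝ (Fin d)} (hx : x ∈ Sw S w '' A)
    (hy : y ∈ Sw S w '' A) :
    dist x y ≤ R ^ w.length * Metric.diam A := by
  obtain ⟨a, ha, rfl⟩ := hx
  obtain ⟨b, hb, rfl⟩ := hy
  calc dist (Sw S w a) (Sw S w b) ≤ R ^ w.length * dist a b := by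
        simpa using (lipschitzWith_Sw hS w).dist_le_mul a b
    _ ≤ R ^ w.length * Metric.diam A := by
        gcongr
        exact Metric.dist_le_diam_of_mem hA ha hb

/-- The level-`n` pieces `Sw S w '' (A ∪ B)` have diameter `O(Rⁿ)` and meet `B`. -/
theorem mem_closure_of_forall_mem_iterate_hutchinson (hS : ∀ i, LipschitzWith R (S i))
    (hR : R < 1) (hAB : Bornology.IsBounded (A ∪ B)) (hB : B.Nonempty)
    (hSB : ∀ i, MapsTo (S i) B B) {x : EuclideanSpace ℝ (Fin d)}
    (hx : ∀ n, x ∈ (hutchinson S)^[n] A) : x ∈ closure B := by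
  obtain ⟨b, hb⟩ := hB
  refine Metric.mem_closure_iff.2 fun ε hε => ?_
  obtain ⟨n, hn⟩ := ((tendsto_pow_mul_nhds_zero hR (Metric.diam (A ∪ B))).eventually
    (gt_mem_nhds hε)).exists
  obtain ⟨w, rfl, hxw⟩ := exists_Sw_of_mem_iterate_hutchinson (hx n)
  exact ⟨Sw S w b, mapsTo_Sw hSB w hb,
    (dist_le_of_mem_Sw_image hS hAB (image_mono subset_union_left hxw)
      (mem_image_of_mem _ (Or.inr hb))).trans_lt hn⟩

theorem subset_of_eq_hutchinson_of_mapsTo (hS : ∀ i, LipschitzWith R (S i)) (hR : R < 1)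
    (hKA : Bornology.IsBounded (K ∪ A)) (hK : K = hutchinson S K) (hA : IsClosed A)
    (hAne : A.Nonempty) (hSA : ∀ i, MapsTo (S i) A A) : K ⊆ A := fun _ hx =>
  hA.closure_subset <| mem_closure_of_forall_mem_iterate_hutchinson hS hR hKA hAne hSA
    fun n => hutchinson_mono.monotone_iterate_of_le_map hK.le (Nat.zero_le n) hx

theorem eventually_notMem_Sw_image (hS : ∀ i, LipschitzWith R (S i)) (hR : R < 1)
    (hK : Bornology.IsBounded K) {w : ℕ → List ι} (hw : ∀ n, (w n).length = n)
    {x y : EuclideanSpace ℝ (Fin d)} (hy : ∀ n, y ∈ Sw S (w n) '' K) (hxy : x ≠ y) :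
    ∀ᶠ n in atTop, x ∉ Sw S (w n) '' K := by
  filter_upwards [(tendsto_pow_mul_nhds_zero hR (Metric.diam K)).eventually
    (gt_mem_nhds (dist_pos.2 hxy))] with n hn hx
  have := dist_le_of_mem_Sw_image hS hK hx (hy n)
  rw [hw n] at this
  exact this.not_gt hn

end SelfSimilar

namespace IsPPolyhedralSystem

open scoped NNReal

variable {d : ℕ} {ι : Type*} {P K : Set (EuclideanSpace ℝ (Fin d))}
  {V : Finset (EuclideanSpace ℝ (Fin d))}
  {S : ι → EuclideanSpace ℝ (Fin d) → EuclideanSpace ℝ (Fin d)}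

theorem injective (hS : IsPPolyhedralSystem P V S) (i : ι) : Function.Injective (S i) := by
  obtain ⟨r, hr, hdist⟩ := hS.1 i
  intro a b hab
  have h := hdist a b
  rw [hab, dist_self, eq_comm, mul_eq_zero] at h
  exact dist_eq_zero.1 (h.resolve_left hr.1.ne')

theorem exists_lipschitzWith [Finite ι] (hS : IsPPolyhedralSystem P V S) :
    ∃ R : ℝ≥0, R < 1 ∧ ∀ i, LipschitzWith R (S i) := by
  choose r hr hdist using hS.1
  have := Fintype.ofFinite ι
  refine ⟨Finset.univ.sup fun i => (r i).toNNReal,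
    (Finset.sup_lt_iff zero_lt_one).2 fun i _ => Real.toNNReal_lt_one.2 (hr i).2, fun i => ?_⟩
  refine (LipschitzWith.of_dist_le_mul fun a b => ?_).weaken
    (Finset.le_sup (f := fun i => (r i).toNNReal) (Finset.mem_univ i))
  rw [Real.coe_toNNReal _ (hr i).1.le, hdist]

theorem mapsTo (hS : IsPPolyhedralSystem P V S) (i : ι) : MapsTo (S i) P P :=
  mapsTo_iff_image_subset.2 (hS.2.1 i)

theorem mem_image_vertices_of_mem_inter (hS : IsPPolyhedralSystem P V S) {i j : ι}
    (hij : i ≠ j) {x : EuclideanSpace ℝ (Fin d)} (hi : x ∈ S i '' P) (hj : x ∈ S j '' P) :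
    x ∈ S i '' V := by
  have hx : x ∈ S i '' P ∩ S j '' P := ⟨hi, hj⟩
  rcases hS.2.2.1 i j hij with h | ⟨v, hv, hvi, -⟩
  · simp [h] at hx
  · rw [hv, mem_singleton_iff] at hx
    exact hx ▸ hvi

theorem vertex_mem_image_vertices (hS : IsPPolyhedralSystem P V S) (hVP : ↑V ⊆ P) {i : ι}
    {a : EuclideanSpace ℝ (Fin d)} (ha : a ∈ V) (hai : a ∈ S i '' P) : a ∈ S i '' V := by
  obtain ⟨j, hj⟩ := mem_iUnion.1 (hS.2.2.2 ha)
  by_cases hij : i = j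
  · exact hij ▸ hj
  · exact hS.mem_image_vertices_of_mem_inter hij hai (image_mono hVP hj)

theorem vertex_mem_Sw_image_vertices (hS : IsPPolyhedralSystem P V S) (hVP : ↑V ⊆ P) :
    ∀ (w : List ι) {a : EuclideanSpace ℝ (Fin d)},
      a ∈ V → a ∈ Sw S w '' P → a ∈ Sw S w '' V
  | [], a, ha, _ => ⟨a, ha, rfl⟩
  | i :: w, _, ha, haw => by
    rw [image_Sw_cons] at haw ⊢
    obtain ⟨b, hb, rfl⟩ := haw
    obtain ⟨c, hc, hcb⟩ := hS.vertex_mem_image_vertices hVP ha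
      (mem_image_of_mem _ (mapsTo_Sw hS.mapsTo w |>.image_subset hb))
    obtain rfl := hS.injective i hcb
    exact mem_image_of_mem _ (hS.vertex_mem_Sw_image_vertices hVP w hc hb)

theorem Sw_image_inter_subset (hS : IsPPolyhedralSystem P V S) (hVP : ↑V ⊆ P) :
    ∀ {w w' : List ι}, w.length = w'.length → w ≠ w' →
      Sw S w '' P ∩ Sw S w' '' P ⊆ Sw S w '' V
  | [], [], _, hne => (hne rfl).elim
  | [], _ :: _, hlen, _ => by simp at hlen
  | _ :: _, [], hlen, _ => by simp at hlen
  | i :: w, j :: w', hlen, hne => by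
    rw [image_Sw_cons, image_Sw_cons, image_Sw_cons]
    rintro _ ⟨⟨b, hb, rfl⟩, ⟨c, hc, hcb⟩⟩
    by_cases hij : i = j
    · subst hij
      obtain rfl := hS.injective i hcb
      exact mem_image_of_mem _ (hS.Sw_image_inter_subset hVP (Nat.succ.inj hlen)
        (fun h => hne (h ▸ rfl)) ⟨hb, hc⟩)
    · have hmemP : ∀ {u : List ι} {x}, x ∈ Sw S u '' P → x ∈ P :=
        fun hx => mapsTo_Sw hS.mapsTo _ |>.image_subset hx
      obtain ⟨a, ha, hab⟩ := hS.mem_image_vertices_of_mem_inter hij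
        (mem_image_of_mem _ (hmemP hb)) (hcb ▸ mem_image_of_mem _ (hmemP hc))
      obtain rfl := hS.injective i hab
      exact mem_image_of_mem _ (hS.vertex_mem_Sw_image_vertices hVP w ha hb)

theorem inter_closure_diff_Sw_image_subset [Finite ι] (hS : IsPPolyhedralSystem P V S)
    (hVP : ↑V ⊆ P) (hK : IsCompact K) (hKinv : K = hutchinson S K) (hKP : K ⊆ P)
    (w : List ι) : Sw S w '' K ∩ closure (K \ Sw S w '' K) ⊆ Sw S w '' V := by
  obtain ⟨R, -, hSR⟩ := hS.exists_lipschitzWith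
  set W := {w' : List ι | w'.length = w.length ∧ w' ≠ w}
  have hclosed : IsClosed (⋃ w' ∈ W, Sw S w' '' K) :=
    ((List.finite_length_eq ι w.length).subset fun _ h => h.1).isClosed_biUnion
      fun w' _ => (hK.image (lipschitzWith_Sw hSR w').continuous).isClosed
  have hcover : K \ Sw S w '' K ⊆ ⋃ w' ∈ W, Sw S w' '' K := by
    rintro x ⟨hxK, hxw⟩
    obtain ⟨w', hw', hxw'⟩ := exists_Sw_of_eq_hutchinson hKinv hxK w.length
    exact mem_biUnion ⟨hw', fun h => hxw (h ▸ hxw')⟩ hxw'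
  rintro x ⟨hxw, hxcl⟩
  obtain ⟨w', ⟨hw', hne⟩, hxw'⟩ := mem_iUnion₂.1 (closure_minimal hcover hclosed hxcl)
  exact hS.Sw_image_inter_subset hVP hw'.symm (Ne.symm hne)
    ⟨image_mono hKP hxw, image_mono hKP hxw'⟩

theorem image_inter_image_nonempty (hS : IsPPolyhedralSystem P V S)
    {A : Set (EuclideanSpace ℝ (Fin d))} (hVA : ↑V ⊆ A) (hA : A.Nonempty) {i j : ι}
    (h : (S i '' P ∩ S j '' P).Nonempty) : (S i '' A ∩ S j '' A).Nonempty := by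
  by_cases hij : i = j
  · subst hij
    simpa using hA
  · rcases hS.2.2.1 i j hij with h' | ⟨v, -, hvi, hvj⟩
    · simp [h'] at h
    · exact ⟨v, image_mono hVA hvi, image_mono hVA hvj⟩

/-- Every edge of the intersection graph of the pieces `S i '' P` is realised at a vertex,
and the vertices survive in all the iterates. -/
theorem isPreconnected_iterate_hutchinson [Finite ι] (hS : IsPPolyhedralSystem P V S)
    (hP : IsCompact P) (hVP : ↑V ⊆ P) (hT : IsPreconnected (hutchinson S P))
    (hKinv : K = hutchinson S K) (hKP : K ⊆ P) (hKne : K.Nonempty) (n : ℕ) :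
    IsPreconnected ((hutchinson S)^[n] (hutchinson S P)) := by
  obtain ⟨R, -, hSR⟩ := hS.exists_lipschitzWith
  induction n with
  | zero => exact hT
  | succ n ih =>
    have hVA := subset_iterate_hutchinson hS.2.2.2 hVP n
    have hA := hKne.mono (subset_iterate_hutchinson hKinv.le hKP n)
    rw [Function.iterate_succ_apply']
    refine IsPreconnected.iUnion_of_reflTransGen
      (fun i => ih.image _ (hSR i).continuous.continuousOn) fun i j => ?_
    exact Relation.ReflTransGen.mono (fun _ _ => hS.image_inter_image_nonempty hVA hA) _ _
      (reflTransGen_of_isPreconnected_iUnion (fun i => (hP.image (hSR i).continuous).isClosed)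
        (fun _ => (hKne.mono hKP).image _) hT i j)

theorem isPreconnected_attractor [Finite ι] (hS : IsPPolyhedralSystem P V S)
    (hP : IsCompact P) (hVP : ↑V ⊆ P) (hT : IsPreconnected (hutchinson S P))
    (hK : IsCompact K) (hKinv : K = hutchinson S K) (hKP : K ⊆ P) (hKne : K.Nonempty) :
    IsPreconnected K := by
  obtain ⟨R, hR, hSR⟩ := hS.exists_lipschitzWith
  have hTP : hutchinson S P ⊆ P := hutchinson_subset_iff.2 hS.mapsTo
  have hKeq : K = ⋂ n, (hutchinson S)^[n] (hutchinson S P) := by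
    refine (subset_iInter (subset_iterate_hutchinson hKinv.le hKP)).antisymm fun x hx => ?_
    exact hK.isClosed.closure_subset <| mem_closure_of_forall_mem_iterate_hutchinson hSR hR
      ((hP.isBounded.subset hTP).union hK.isBounded) hKne (hutchinson_subset_iff.1 hKinv.ge)
      (mem_iInter.1 hx)
  rw [hKeq]
  exact isPreconnected_iInter_of_antitone
    (hutchinson_mono.antitone_iterate_of_map_le (hutchinson_mono hTP))
    (isCompact_iterate_hutchinson (fun i => (hSR i).continuous)
      (isCompact_iUnion fun i => hP.image (hSR i).continuous))
    (hS.isPreconnected_iterate_hutchinson hP hVP hT hKinv hKP hKne)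

end IsPPolyhedralSystem

theorem stmt_17_general {d m : ℕ} (P : Set (EuclideanSpace ℝ (Fin d)))
    (V : Finset (EuclideanSpace ℝ (Fin d)))
    (S : Fin m → EuclideanSpace ℝ (Fin d) → EuclideanSpace ℝ (Fin d))
    (hP : IsPolyhedronWithVertices P V)
    (hS : IsPPolyhedralSystem P V S)
    (hcontr : ContractibleSpace ↥(⋃ i, S i '' P))
    (K : Set (EuclideanSpace ℝ (Fin d))) (hKc : IsCompact K)
    (hKinv : K = ⋃ i, S i '' K)
    (y : EuclideanSpace ℝ (Fin d)) (hy : y ∈ K)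
    (hyv : y ∉ ⋃ j : List (Fin m), Sw S j '' (V : Set (EuclideanSpace ℝ (Fin d)))) :
    {C : Set (EuclideanSpace ℝ (Fin d)) |
        ∃ z ∈ K \ {y}, C = connectedComponentIn (K \ {y}) z}.Finite ∧
    Nat.card {C : Set (EuclideanSpace ℝ (Fin d)) |
        ∃ z ∈ K \ {y}, C = connectedComponentIn (K \ {y}) z} ≤ V.card := by
  obtain ⟨hPc, hVP, ⟨e⟩⟩ := hP
  obtain ⟨R, hR, hSR⟩ := hS.exists_lipschitzWith
  have hPne : P.Nonempty := ⟨_, (e.symm ⟨0, Metric.mem_closedBall_self zero_le_one⟩).2⟩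
  have hKP : K ⊆ P := subset_of_eq_hutchinson_of_mapsTo hSR hR
    (hKc.isBounded.union hPc.isBounded) hKinv hPc.isClosed hPne hS.mapsTo
  have hT : IsPreconnected (⋃ i, S i '' P) :=
    isPreconnected_iff_preconnectedSpace.2 inferInstance
  have hKconn : IsPreconnected K :=
    hS.isPreconnected_attractor hPc hVP hT hKc hKinv hKP ⟨y, hy⟩
  choose w hw hyw using exists_Sw_of_eq_hutchinson hKinv hy
  have hfront n := hS.inter_closure_diff_Sw_image_subset hVP hKc hKinv hKP (w n)
  refine finite_components_diff_singleton_of_frontier_card_le hKconn hKc hy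
    (fun n => Sw S (w n) '' K) (fun n => V.image (Sw S (w n)))
    (fun n => (hKc.image (lipschitzWith_Sw hSR (w n)).continuous).isClosed)
    (fun n hycl => hyv (mem_iUnion.2 ⟨w n, hfront n ⟨hyw n, hycl⟩⟩))
    (fun x hxy => eventually_notMem_Sw_image hSR hR hKc.isBounded hw hyw hxy)
    (fun n => by simpa using hfront n) (fun n => Finset.card_image_le)

/-- For the attractor `K` of a contractible `P`-polyhedral system, a cut point `y ∈ K`
not a vertex of any `P_j` has at most `n_P = #V` components in `K \ {y}`. -/
theorem stmt_17 {d m : ℕ} (P : Set (EuclideanSpace ℝ (Fin d)))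
    (V : Finset (EuclideanSpace ℝ (Fin d)))
    (S : Fin m → EuclideanSpace ℝ (Fin d) → EuclideanSpace ℝ (Fin d))
    (hP : IsPolyhedronWithVertices P V)
    (hS : IsPPolyhedralSystem P V S)
    (hcontr : ContractibleSpace ↥(⋃ i, S i '' P))
    (K : Set (EuclideanSpace ℝ (Fin d))) (hKne : K.Nonempty) (hKc : IsCompact K)
    (hKinv : K = ⋃ i, S i '' K)
    (y : EuclideanSpace ℝ (Fin d)) (hy : y ∈ K)
    (hcut : ¬ IsPreconnected (K \ {y}))
    (hyv : y ∉ ⋃ j : List (Fin m), Sw S j '' (V : Set (EuclideanSpace ℝ (Fin d)))) :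
    {C : Set (EuclideanSpace ℝ (Fin d)) |
        ∃ z ∈ K \ {y}, C = connectedComponentIn (K \ {y}) z}.Finite ∧
    Nat.card {C : Set (EuclideanSpace ℝ (Fin d)) |
        ∃ z ∈ K \ {y}, C = connectedComponentIn (K \ {y}) z} ≤ V.card :=
  stmt_17_general P V S hP hS hcontr K hKc hKinv y hy hyv
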